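/- arXiv:1509.00247 — 4 statements merged into one kernel-verified Lean document; each statement's English description precedes it below -/
import Mathlib

section
/- Let a group $G$ be generated by two commuting subgroups $H$ and $K$ (every element of $H$ commutes with every element of $K$), with $G$ acting on a probability space $(X,\mu)$ by measure-preserving transformations. Let $\mathcal{E}$ be an equivalence relation on $X$ contained in the orbit equivalence relation of $G$, and for $g \in G$ set $A_g := \{x \in X : gx \,\mathcal{E}\, x\}$ (assumed measurable). Then for every $k \in K$ and every $s \in H$ one has $s^{-1} A_k \,\triangle\, A_k \subseteq X \setminus (A_s \cap k^{-1} A_s)$, and consequently $\mu(s^{-1} A_k \,\triangle\, A_k) \le 1 - \mu(A_s \cap k^{-1} A_s)$. -/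
/-!
If `s` commutes with `k` and `x ∈ A s ∩ k⁻¹ • A s`, then `s • x ∼ x` and `s • (k • x) ∼ k • x`,
so `k • x ∼ x` holds iff `k • (s • x) ∼ s • x`: the point `x` lies in both or in neither of
`A k` and `s⁻¹ • A k`. For the measure bound, invariance of `μ` under translation of arbitrary
sets lets one split `A s` along `k⁻¹ • A s` although only `A s` is known to be measurable.
-/

open MeasureTheory Pointwise symmDiff

section SameClassSet

variable {G X : Type*} [Group G] [MulAction G X]

def sameClassSet (E : X → X → Prop) (g : G) : Set X := {x | E (g • x) x}

theorem mem_sameClassSet_iff_smul_mem_of_commute {E : X → X → Prop} (hE : Equivalence E)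
    {s k : G} (hsk : Commute s k) {x : X} (hs : x ∈ sameClassSet E s)
    (hks : k • x ∈ sameClassSet E s) :
    x ∈ sameClassSet E k ↔ s • x ∈ sameClassSet E k := by
  have hswap : s • k • x = k • s • x := by rw [smul_smul, smul_smul, hsk.eq]
  simp only [sameClassSet, Set.mem_ofPred_eq] at hs hks ⊢
  rw [hswap] at hks
  exact ⟨fun h => hE.trans hks (hE.trans h (hE.symm hs)),
    fun h => hE.trans (hE.trans (hE.symm hks) h) hs⟩

theorem inv_smul_sameClassSet_symmDiff_subset {E : X → X → Prop} (hE : Equivalence E)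
    {s k : G} (hsk : Commute s k) :
    (s⁻¹ • sameClassSet E k) ∆ sameClassSet E k ⊆
      (sameClassSet E s ∩ k⁻¹ • sameClassSet E s)ᶜ := by
  rintro x hx ⟨hs, hks⟩
  rw [Set.mem_inv_smul_set_iff] at hks
  have hiff := mem_sameClassSet_iff_smul_mem_of_commute hE hsk hs hks
  rw [Set.mem_symmDiff, Set.mem_inv_smul_set_iff] at hx
  tauto

end SameClassSet

section InvariantMeasure

variable {G X : Type*} [Group G] [MulAction G X] [MeasurableSpace X] {μ : Measure X}

theorem measure_inter_smul_add_sdiff_smul (hmp : ∀ (g : G) (B : Set X), μ (g • B) = μ B)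
    {S : Set X} (hS : MeasurableSet S) (g : G) :
    μ (S ∩ g • S) + μ (S \ g • S) = μ S := by
  have hinter : μ (g⁻¹ • S ∩ S) = μ (S ∩ g • S) := by
    rw [← hmp g⁻¹ (S ∩ g • S), Set.smul_set_inter, inv_smul_smul]
  have hsdiff : μ (g⁻¹ • S \ S) = μ (S \ g • S) := by
    rw [← hmp g⁻¹ (S \ g • S), Set.smul_set_sdiff, inv_smul_smul]
  rw [← hinter, ← hsdiff, measure_inter_add_sdiff _ hS, hmp]

theorem measure_le_one_sub_of_subset_compl_inter_smul [IsProbabilityMeasure μ]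
    (hmp : ∀ (g : G) (B : Set X), μ (g • B) = μ B) {S C : Set X} (hS : MeasurableSet S)
    (g : G) (hC : C ⊆ (S ∩ g • S)ᶜ) :
    μ C ≤ 1 - μ (S ∩ g • S) := by
  refine ENNReal.le_sub_of_add_le_right (measure_ne_top μ _) ?_
  have hcompl : (S ∩ g • S)ᶜ ⊆ Sᶜ ∪ S \ g • S := fun x hx => by
    by_cases hxS : x ∈ S
    · exact Or.inr ⟨hxS, fun hxg => hx ⟨hxS, hxg⟩⟩
    · exact Or.inl hxS
  calc μ C + μ (S ∩ g • S) ≤ μ Sᶜ + μ (S \ g • S) + μ (S ∩ g • S) := by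
        gcongr
        exact (measure_mono (hC.trans hcompl)).trans (measure_union_le _ _)
    _ = μ Sᶜ + μ S := by rw [add_assoc, add_comm (μ (S \ _)), measure_inter_smul_add_sdiff_smul hmp hS]
    _ = 1 := by rw [measure_compl hS (measure_ne_top μ S), measure_univ,
        tsub_add_cancel_of_le prob_le_one]

end InvariantMeasure

theorem stmt1_general {G X : Type*} [Group G] [MulAction G X] [MeasurableSpace X]
    (μ : Measure X) [IsProbabilityMeasure μ]
    (hmp : ∀ (g : G) (B : Set X), μ (g • B) = μ B)
    (H K : Subgroup G)
    (hcomm : ∀ h ∈ H, ∀ k ∈ K, h * k = k * h)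
    (E : X → X → Prop) (hE : Equivalence E)
    (A : G → Set X) (hA : ∀ g : G, A g = {x | E (g • x) x})
    (hAmeas : ∀ g, MeasurableSet (A g)) :
    ∀ k ∈ K, ∀ s ∈ H,
      (s⁻¹ • A k) ∆ (A k) ⊆ (A s ∩ k⁻¹ • A s)ᶜ ∧
      μ ((s⁻¹ • A k) ∆ (A k)) ≤ 1 - μ (A s ∩ k⁻¹ • A s) := by
  intro k hk s hs
  obtain rfl : A = sameClassSet E := funext hA
  have hincl := inv_smul_sameClassSet_symmDiff_subset hE (hcomm s hs k hk)
  exact ⟨hincl, measure_le_one_sub_of_subset_compl_inter_smul hmp (hAmeas s) k⁻¹ hincl⟩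

/-- For commuting generating subgroups `H`, `K` and `A g = {x | g • x ∼ x}`, one has
`s⁻¹ • A k ∆ A k ⊆ (A s ∩ k⁻¹ • A s)ᶜ` and the corresponding measure estimate. -/
theorem stmt1 {G X : Type*} [Group G] [MulAction G X] [MeasurableSpace X]
    (μ : Measure X) [IsProbabilityMeasure μ]
    (hmp : ∀ (g : G) (B : Set X), μ (g • B) = μ B)
    (H K : Subgroup G) (hgen : H ⊔ K = ⊤)
    (hcomm : ∀ h ∈ H, ∀ k ∈ K, h * k = k * h)
    (E : X → X → Prop) (hE : Equivalence E)
    (hEsub : ∀ x y : X, E x y → ∃ g : G, g • x = y)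
    (A : G → Set X) (hA : ∀ g : G, A g = {x | E (g • x) x})
    (hAmeas : ∀ g, MeasurableSet (A g)) :
    ∀ k ∈ K, ∀ s ∈ H,
      (s⁻¹ • A k) ∆ (A k) ⊆ (A s ∩ k⁻¹ • A s)ᶜ ∧
      μ ((s⁻¹ • A k) ∆ (A k)) ≤ 1 - μ (A s ∩ k⁻¹ • A s) :=
  stmt1_general μ hmp H K hcomm E hE A hA hAmeas
end

section
/- Every finite equivalence relation is non-approximable: if $\mathcal{R}$ is an equivalence relation on a probability space $(X,\mu)$ all of whose classes are finite of uniformly bounded size $\le N$, and $\mathcal{R} = \bigcup_n \nearrow \mathcal{R}_n$ is an increasing union of equivalence relations, then there exists $n$ and a measurable set $A$ with $\mu(A) > 0$ such that $\mathcal{R}_n \cap (A \times A) = \mathcal{R} \cap (A \times A)$. (One may take a countable Borel equivalence relation setting and in fact find $n$ with $\mathcal{R}_n = \mathcal{R}$ on a set of measure $> 1 - \epsilon$ for any $\epsilon > 0$.) -/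
open MeasureTheory Filter Set

/- Each class is finite and every pair in it is eventually related by the increasing
sequence `r n`, so each point lies in the set where `r n` already agrees with `R` on its class,
for some `n`. These countably many measurable sets cover `X`, hence one of them has positive
measure, and on it `r n` and `R` coincide. -/

theorem eventually_forall_of_finite_of_monotone {X : Type*} {R : X → X → Prop}
    {r : ℕ → X → X → Prop} (hr : Monotone r) {x : X} (hx : {y | R x y}.Finite)
    (hR : ∀ y, R x y → ∃ n, r n x y) :
    ∀ᶠ n in atTop, ∀ y, R x y → r n x y := by
  refine hx.eventually_all.2 fun y hy => ?_
  obtain ⟨n, hn⟩ := hR y hy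
  exact eventually_atTop.2 ⟨n, fun m hm => hr hm x y hn⟩

theorem stmt14_general {X : Type*} [MeasurableSpace X] (μ : Measure X) [IsProbabilityMeasure μ]
    (R : X → X → Prop) (N : ℕ)
    (hfin : ∀ x : X, {y | R x y}.Finite ∧ {y | R x y}.ncard ≤ N)
    (r : ℕ → X → X → Prop)
    (hmono : ∀ n (x y : X), r n x y → r (n + 1) x y)
    (hunion : ∀ x y : X, R x y ↔ ∃ n, r n x y)
    (hmeas : ∀ n, MeasurableSet {x : X | ∀ y : X, R x y → r n x y}) :
    ∃ n, ∃ A : Set X, MeasurableSet A ∧ 0 < μ A ∧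
      ∀ x ∈ A, ∀ y ∈ A, (r n x y ↔ R x y) := by
  have hr : Monotone r := monotone_nat_of_le_succ hmono
  have hcover : (⋃ n, {x : X | ∀ y : X, R x y → r n x y}) = univ :=
    iUnion_eq_univ_iff.2 fun x =>
      (eventually_forall_of_finite_of_monotone hr (hfin x).1 fun y => (hunion x y).1).exists
  obtain ⟨n, hn⟩ := exists_measure_pos_of_not_measure_iUnion_null (μ := μ)
    (hcover ▸ NeZero.ne (μ univ))
  exact ⟨n, _, hmeas n, hn, fun x hx y _ => ⟨fun h => (hunion x y).2 ⟨n, h⟩, hx y⟩⟩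

/-- An equivalence relation with classes of size at most `N` is non-approximable:
any increasing approximation of it is trivial. -/
theorem stmt14 {X : Type*} [MeasurableSpace X] (μ : Measure X) [IsProbabilityMeasure μ]
    (R : X → X → Prop) (hR : Equivalence R) (N : ℕ)
    (hfin : ∀ x : X, {y | R x y}.Finite ∧ {y | R x y}.ncard ≤ N)
    (r : ℕ → X → X → Prop) (hr : ∀ n, Equivalence (r n))
    (hmono : ∀ n (x y : X), r n x y → r (n + 1) x y)
    (hsub : ∀ n (x y : X), r n x y → R x y)
    (hunion : ∀ x y : X, R x y ↔ ∃ n, r n x y)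
    (hmeas : ∀ n, MeasurableSet {x : X | ∀ y : X, R x y → r n x y}) :
    ∃ n, ∃ A : Set X, MeasurableSet A ∧ 0 < μ A ∧
      ∀ x ∈ A, ∀ y ∈ A, (r n x y ↔ R x y) :=
  stmt14_general μ R N hfin r hmono hunion hmeas
end

section
/- (Strong ergodicity dichotomy step) Let $H$ act on a probability space $(X,\mu)$ by measure-preserving transformations, strongly ergodically with respect to a generating set $S$ in the quantitative sense: for every $\epsilon_0 > 0$ there is $\delta_0 > 0$ such that any measurable $A$ with $\sup_{s \in S} \mu(s^{-1}A \triangle A) < \delta_0$ satisfies $\mu(A) < \epsilon_0$ or $\mu(A) > 1 - \epsilon_0$. Let $K$ be a group commuting with $H$ inside a common group acting on $X$, let $\mathcal{E}$ be an equivalence relation contained in the orbit relation, $A_g = \{x : gx \,\mathcal{E}\, x\}$, and suppose $\mu(A_s) > 1 - \delta$ for all $s \in S$ with $2\delta < \delta_0$. Then for every $k \in K$: either $\mu(A_k) < \epsilon_0$ or $\mu(A_k) > 1 - \epsilon_0$. -/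
/-!
Since `s ∈ S` commutes with `k ∈ K`, `k • s • x = s • k • x`; so whenever `s` keeps both `x`
and `k • x` inside their `E`-classes, `s • x ∈ A_k ↔ x ∈ A_k`. Hence
`s⁻¹ • A_k ∆ A_k ⊆ A_sᶜ ∪ k⁻¹ • A_sᶜ`, a set of measure at most `2δ < δ₀`, and strong
ergodicity applies to `A_k`.
-/

open MeasureTheory Pointwise symmDiff

section RelatedSet

variable {G X : Type*} [Group G] [MulAction G X]

/-- The set `A_g` of points that `g` moves inside their `E`-class. -/
def relatedSet (E : X → X → Prop) (g : G) : Set X := {x | E (g • x) x}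

variable {E : X → X → Prop} {s k : G}

lemma smul_mem_relatedSet_iff (hE : Equivalence E) (hsk : Commute s k) {x : X}
    (hx : x ∈ relatedSet E s) (hkx : k • x ∈ relatedSet E s) :
    s • x ∈ relatedSet E k ↔ x ∈ relatedSet E k := by
  change E (k • s • x) (s • x) ↔ E (k • x) x
  rw [smul_smul, ← hsk.eq, ← smul_smul]
  change E (s • k • x) (k • x) at hkx
  exact ⟨fun h => hE.trans (hE.trans (hE.symm hkx) h) hx,
    fun h => hE.trans hkx (hE.trans h (hE.symm hx))⟩

lemma symmDiff_inv_smul_relatedSet_subset (hE : Equivalence E) (hsk : Commute s k) :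
    (s⁻¹ • relatedSet E k) ∆ relatedSet E k ⊆
      (relatedSet E s)ᶜ ∪ k⁻¹ • (relatedSet E s)ᶜ := by
  intro x hx
  by_contra hout
  simp only [Set.mem_union, Set.mem_compl_iff, not_or, not_not, Set.smul_set_compl,
    Set.mem_inv_smul_set_iff] at hout
  have hiff := smul_mem_relatedSet_iff hE hsk hout.1 hout.2
  rw [Set.mem_symmDiff, Set.mem_inv_smul_set_iff, hiff] at hx
  tauto

variable [MeasurableSpace X] {μ : Measure X}

lemma measure_symmDiff_inv_smul_relatedSet_le (hE : Equivalence E) (hsk : Commute s k)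
    (hμk : ∀ B : Set X, μ (k⁻¹ • B) = μ B) :
    μ ((s⁻¹ • relatedSet E k) ∆ relatedSet E k) ≤ 2 * μ (relatedSet E s)ᶜ :=
  calc μ ((s⁻¹ • relatedSet E k) ∆ relatedSet E k)
      ≤ μ ((relatedSet E s)ᶜ ∪ k⁻¹ • (relatedSet E s)ᶜ) :=
        measure_mono (symmDiff_inv_smul_relatedSet_subset hE hsk)
    _ ≤ μ (relatedSet E s)ᶜ + μ (k⁻¹ • (relatedSet E s)ᶜ) := measure_union_le _ _
    _ = 2 * μ (relatedSet E s)ᶜ := by rw [hμk, two_mul]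

lemma toReal_measure_symmDiff_inv_smul_relatedSet_le [IsProbabilityMeasure μ]
    (hE : Equivalence E) (hsk : Commute s k) (hμk : ∀ B : Set X, μ (k⁻¹ • B) = μ B)
    (hs : MeasurableSet (relatedSet E s)) :
    (μ ((s⁻¹ • relatedSet E k) ∆ relatedSet E k)).toReal ≤
      2 * (1 - (μ (relatedSet E s)).toReal) := by
  have h := ENNReal.toReal_mono (by finiteness)
    (measure_symmDiff_inv_smul_relatedSet_le hE hsk hμk)
  rwa [ENNReal.toReal_mul, ENNReal.toReal_ofNat, ← measureReal_def μ (relatedSet E s)ᶜ,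
    probReal_compl_eq_one_sub hs, measureReal_def] at h

end RelatedSet

theorem stmt16_general {G X : Type*} [Group G] [MulAction G X] [MeasurableSpace X]
    (μ : Measure X) [IsProbabilityMeasure μ]
    (hmp : ∀ (g : G) (B : Set X), μ (g • B) = μ B)
    (H K : Subgroup G) (hcomm : ∀ h ∈ H, ∀ k ∈ K, h * k = k * h)
    (S : Set G) (hSH : Subgroup.closure S = H)
    (ε₀ δ₀ δ : ℝ) (hδ : 2 * δ < δ₀)
    (hse : ∀ A : Set X, MeasurableSet A →
      (∀ s ∈ S, (μ ((s⁻¹ • A) ∆ A)).toReal < δ₀) →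
      (μ A).toReal < ε₀ ∨ (μ A).toReal > 1 - ε₀)
    (E : X → X → Prop) (hE : Equivalence E)
    (A : G → Set X) (hA : ∀ g : G, A g = {x | E (g • x) x})
    (hAmeas : ∀ g, MeasurableSet (A g))
    (hδS : ∀ s ∈ S, (μ (A s)).toReal > 1 - δ) :
    ∀ k ∈ K, (μ (A k)).toReal < ε₀ ∨ (μ (A k)).toReal > 1 - ε₀ := by
  obtain rfl : A = relatedSet E := funext hA
  intro k hk
  refine hse _ (hAmeas k) fun s hs => ?_
  have hsH : s ∈ H := hSH ▸ Subgroup.subset_closure hs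
  have hsym := toReal_measure_symmDiff_inv_smul_relatedSet_le hE (hcomm s hsH k hk)
    (hmp k⁻¹) (hAmeas s)
  linarith [hδS s hs]

/-- Strong ergodicity dichotomy step: if `H` acts quantitatively strongly ergodically
with respect to a generating set `S`, `K` commutes with `H`, and `μ (A s) > 1 - δ` for
all `s ∈ S` with `2δ < δ₀`, then for each `k ∈ K` either `μ (A k) < ε₀` or
`μ (A k) > 1 - ε₀`. -/
theorem stmt16 {G X : Type*} [Group G] [MulAction G X] [MeasurableSpace X]
    (μ : Measure X) [IsProbabilityMeasure μ]
    (hmp : ∀ (g : G) (B : Set X), μ (g • B) = μ B)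
    (H K : Subgroup G) (hcomm : ∀ h ∈ H, ∀ k ∈ K, h * k = k * h)
    (S : Set G) (hSH : Subgroup.closure S = H)
    (ε₀ δ₀ δ : ℝ) (hε₀ : 0 < ε₀) (hδ₀ : 0 < δ₀) (hδ : 2 * δ < δ₀)
    (hse : ∀ A : Set X, MeasurableSet A →
      (∀ s ∈ S, (μ ((s⁻¹ • A) ∆ A)).toReal < δ₀) →
      (μ A).toReal < ε₀ ∨ (μ A).toReal > 1 - ε₀)
    (E : X → X → Prop) (hE : Equivalence E)
    (hEsub : ∀ x y : X, E x y → ∃ g : G, g • x = y)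
    (A : G → Set X) (hA : ∀ g : G, A g = {x | E (g • x) x})
    (hAmeas : ∀ g, MeasurableSet (A g))
    (hδS : ∀ s ∈ S, (μ (A s)).toReal > 1 - δ) :
    ∀ k ∈ K, (μ (A k)).toReal < ε₀ ∨ (μ (A k)).toReal > 1 - ε₀ :=
  stmt16_general μ hmp H K hcomm S hSH ε₀ δ₀ δ hδ hse E hE A hA hAmeas hδS
end

section
/- In the Baumslag–Solitar group $B(p,q) = \langle a, t \mid t a^p t^{-1} = a^q \rangle$, the kernel $N$ of the modular homomorphism $B(p,q) \to \mathbb{Q}^*$ sending $t \mapsto p/q$ and $a \mapsto 1$ has the property that every element $w \in N$ commutes with some nontrivial power $a^{k_w}$ ($k_w \ne 0$) of $a$. -/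
/-!
The modular map records how an element rescales powers of `a`: the elements `v` with
`v a^k v⁻¹ = a^m` for some `k ≠ 0` and `k = φ(v) m` form a subgroup. It contains `a`, and `t` by the
defining relation `t a^p t⁻¹ = a^q`, so it is the whole group. For `v` in the kernel, `m = k`,
hence `v` commutes with `a^k`.
-/

section ZpowScaling

variable {G : Type*} [Group G]

theorem conj_zpow_mul_eq {v a : G} {k m : ℤ} (h : v * a ^ k * v⁻¹ = a ^ m) (s : ℤ) :
    v * a ^ (k * s) * v⁻¹ = a ^ (m * s) := by
  rw [zpow_mul, zpow_mul, ← h, conj_zpow]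

def zpowScalingSubgroup (φ : G →* ℚˣ) (a : G) : Subgroup G where
  carrier := {v | ∃ k m : ℤ, k ≠ 0 ∧ (k : ℚ) = φ v * m ∧ v * a ^ k * v⁻¹ = a ^ m}
  one_mem' := ⟨1, 1, one_ne_zero, by simp, by simp⟩
  mul_mem' := by
    rintro x y ⟨k₁, m₁, hk₁, hφx, hx⟩ ⟨k₂, m₂, hk₂, hφy, hy⟩
    refine ⟨k₁ * k₂, m₁ * m₂, mul_ne_zero hk₁ hk₂, ?_, ?_⟩
    · push_cast [hφx, hφy, map_mul, Units.val_mul]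
      ring
    · calc x * y * a ^ (k₁ * k₂) * (x * y)⁻¹
          = x * (y * a ^ (k₂ * k₁) * y⁻¹) * x⁻¹ := by rw [mul_comm k₁ k₂]; group
        _ = x * a ^ (k₁ * m₂) * x⁻¹ := by rw [conj_zpow_mul_eq hy, mul_comm m₂]
        _ = a ^ (m₁ * m₂) := conj_zpow_mul_eq hx m₂
  inv_mem' := by
    rintro x ⟨k, m, hk, hφx, hx⟩
    have hm : m ≠ 0 := by rintro rfl; simp_all
    refine ⟨m, k, hm, ?_, ?_⟩
    · rw [hφx, map_inv, Units.val_inv_eq_inv_val, inv_mul_cancel_left₀ (Units.ne_zero _)]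
    · rw [← hx]; group

variable {φ : G →* ℚˣ} {a : G}

theorem self_mem_zpowScalingSubgroup (ha : φ a = 1) : a ∈ zpowScalingSubgroup φ a :=
  ⟨1, 1, one_ne_zero, by simp [ha], by group⟩

theorem exists_commute_zpow_of_mem_zpowScalingSubgroup {w : G}
    (hw : w ∈ zpowScalingSubgroup φ a) (hφw : φ w = 1) :
    ∃ k : ℤ, k ≠ 0 ∧ Commute w (a ^ k) := by
  obtain ⟨k, m, hk, hkm, hconj⟩ := hw
  rw [hφw, Units.val_one, one_mul, Int.cast_inj] at hkm
  subst hkm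
  exact ⟨k, hk, mul_inv_eq_iff_eq_mul.mp hconj⟩

end ZpowScaling

theorem PresentedGroup.of_mul_zpow_mul_inv_eq {α : Type*} {rels : Set (FreeGroup α)} {a t : α}
    {p q : ℤ}
    (hrel : FreeGroup.of t * FreeGroup.of a ^ p * (FreeGroup.of t)⁻¹ * (FreeGroup.of a ^ q)⁻¹
      ∈ rels) :
    PresentedGroup.of (rels := rels) t * PresentedGroup.of a ^ p * (PresentedGroup.of t)⁻¹ =
      PresentedGroup.of a ^ q := by
  have h := PresentedGroup.mk_eq_mk_of_mul_inv_mem hrel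
  simp only [map_mul, map_inv, map_zpow] at h
  exact h

/-- In the Baumslag–Solitar group `B(p,q) = ⟨a, t ∣ t a^p t⁻¹ = a^q⟩`, every element of
the kernel of the modular map (`a ↦ 1`, `t ↦ p/q`) commutes with some nontrivial power
of `a`. -/
theorem stmt18 (p q : ℤ) (hp : p ≠ 0) (hq : q ≠ 0)
    (rels : Set (FreeGroup (Fin 2)))
    (hrels : rels = {FreeGroup.of 1 * FreeGroup.of 0 ^ p * (FreeGroup.of 1)⁻¹ *
      (FreeGroup.of 0 ^ q)⁻¹})
    (φ : PresentedGroup rels →* ℚˣ)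
    (hφa : φ (PresentedGroup.of 0) = 1)
    (hφt : ((φ (PresentedGroup.of 1) : ℚˣ) : ℚ) = (p : ℚ) / q)
    (w : PresentedGroup rels) (hw : w ∈ φ.ker) :
    ∃ k : ℤ, k ≠ 0 ∧ Commute w ((PresentedGroup.of (rels := rels) 0) ^ k) := by
  have ht : PresentedGroup.of 1 ∈ zpowScalingSubgroup φ (PresentedGroup.of 0) := by
    refine ⟨p, q, hp, ?_, PresentedGroup.of_mul_zpow_mul_inv_eq (hrels ▸ rfl)⟩
    rw [hφt, div_mul_cancel₀ _ (Int.cast_ne_zero.mpr hq)]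
  have hgen : ∀ j : Fin 2, PresentedGroup.of j ∈ zpowScalingSubgroup φ (PresentedGroup.of 0) := by
    intro j
    fin_cases j
    exacts [self_mem_zpowScalingSubgroup hφa, ht]
  exact exists_commute_zpow_of_mem_zpowScalingSubgroup
    (PresentedGroup.generated_by rels _ hgen w) hw
end
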